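/- arXiv:1808.06994 — 2 statements merged into one kernel-verified Lean document; each statement's English description precedes it below -/
import Mathlib

section
/- If U is a real-connected slice-domain in ℍ, then for every I ∈ 𝕊 the slice U ∩ ℂ_I is a (possibly empty) connected open subset of ℂ_I. -/
/-!
A set is slice-open exactly when all its slices are open. Two slices `ℂ_I`, `ℂ_J` with
`J ≠ ±I` meet only in `ℝ`, and `ℂ_{-I}` is `ℂ_I` reparametrised by complex conjugation.
Hence a relatively clopen piece of `U ∩ ℂ_I` that avoids `ℝ` is also relatively clopen in `U`
for the slice topology, and slice-connectedness of `U` forces it to be empty or everything.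
So both halves of a separation of `U ∩ ℂ_I` would meet `ℝ`, contradicting the connectedness
of `U ∩ ℝ`.
-/

noncomputable section

abbrev Hq := Quaternion ℝ

/-- The sphere of imaginary units of the quaternions. -/
def SphereS : Set Hq := {q | q ^ 2 = -1}

/-- The identification of `ℂ` with the slice plane `ℂ_I = ℝ + ℝI`. -/
def sliceEmb (I : Hq) : ℂ → Hq := fun z => (z.re : Hq) + (z.im : Hq) * I

/-- The slice complex plane `ℂ_I = ℝ + ℝI`. -/
def sliceC (I : Hq) : Set Hq := Set.range (sliceEmb I)

/-- The slice-topology on the quaternions: the quotient topology induced by the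
canonical map from the disjoint union of the slices, i.e. the supremum of the
topologies coinduced by the parametrizations of the slices. -/
def sliceTopology : TopologicalSpace Hq :=
  ⨆ I ∈ SphereS, TopologicalSpace.coinduced (sliceEmb I) inferInstance

/-- The real line inside the quaternions. -/
def realLine : Set Hq := Set.range (fun x : ℝ => (x : Hq))

/-- `g : ℂ → ℍ` (thought of as a function on the slice `ℂ_I`) is (left) holomorphic on
`U`: real differentiable with `∂ₓ g + I ∂_y g = 0`. -/
def SliceHolomorphicOn (I : Hq) (g : ℂ → Hq) (U : Set ℂ) : Prop :=
  ∀ z ∈ U, ∃ L : ℂ →L[ℝ] Hq, HasFDerivAt g L z ∧ L 1 + I * L Complex.I = 0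

/-- A function on a slice-open set is slice regular if it is holomorphic on each slice. -/
def SliceRegular (f : Hq → Hq) (Ω : Set Hq) : Prop :=
  ∀ I ∈ SphereS, SliceHolomorphicOn I (f ∘ sliceEmb I) (sliceEmb I ⁻¹' Ω)

/-- `K(m)` for `K ∈ 𝕊^N` (with `K 0 = 1` by convention) and `1 ≤ m ≤ 2^N`:
`∏_{i=N}^{1} (K_i K_{i-1})^{m_i}` where `(m_N … m_1)₂` is the binary expansion of `m-1`. -/
def zetaTerm (K : ℕ → Hq) (N m : ℕ) : Hq :=
  ((List.range N).reverse.map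
    (fun j => (K (j + 1) * K j) ^ (if Nat.testBit (m - 1) j then 1 else 0))).prod

/-- The matrix `σ_N` (0-indexed): entry `(i,j)` is `(-1)^{N+(j+1)}` if
`(i+1)+(j+1) = 2^N + 1`, and `0` otherwise. -/
def sigmaMat (N : ℕ) : Matrix (Fin (2 ^ N)) (Fin (2 ^ N)) ℝ :=
  Matrix.of fun i j =>
    if (i : ℕ) + (j : ℕ) = 2 ^ N - 1 then (-1 : ℝ) ^ (N + (j : ℕ) + 1) else 0

def QOrth (I J : Hq) : Prop := (I * star J).re = 0

open Set Function ComplexConjugate Topology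

lemma isOpen_sliceTopology_iff {s : Set Hq} :
    IsOpen[sliceTopology] s ↔ ∀ I ∈ SphereS, IsOpen (sliceEmb I ⁻¹' s) := by
  unfold sliceTopology
  simp only [isOpen_iSup_iff, isOpen_coinduced]

section Sphere

variable {I : Hq}

lemma normSq_eq_one_of_mem_sphereS (hI : I ∈ SphereS) : Quaternion.normSq I = 1 := by
  have h := congrArg Quaternion.normSq (show I ^ 2 = -1 from hI)
  rw [map_pow, Quaternion.normSq_neg, map_one] at h
  exact (pow_eq_one_iff_of_nonneg Quaternion.normSq_nonneg two_ne_zero).1 h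

lemma re_eq_zero_of_mem_sphereS (hI : I ∈ SphereS) : I.re = 0 :=
  Quaternion.sq_eq_neg_normSq.1 (by rw [normSq_eq_one_of_mem_sphereS hI]; exact hI)

lemma ne_zero_of_mem_sphereS (hI : I ∈ SphereS) : I ≠ 0 :=
  Quaternion.normSq_ne_zero.1 (by rw [normSq_eq_one_of_mem_sphereS hI]; exact one_ne_zero)

end Sphere

lemma sliceEmb_neg (I : Hq) (z : ℂ) : sliceEmb (-I) z = sliceEmb I (conj z) := by
  simp only [sliceEmb, Complex.conj_re, Complex.conj_im, Quaternion.coe_neg, neg_mul, mul_neg]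

lemma sliceEmb_comp_ofReal (I : Hq) : sliceEmb I ∘ ((↑) : ℝ → ℂ) = fun x : ℝ => (x : Hq) := by
  ext x <;> simp [sliceEmb]

lemma re_sliceEmb {I : Hq} (hI : I ∈ SphereS) (z : ℂ) : (sliceEmb I z).re = z.re := by
  simp [sliceEmb, re_eq_zero_of_mem_sphereS hI]

section SliceIntersection

variable {I J : Hq} {z w : ℂ}

lemma re_eq_and_im_mul_eq_of_sliceEmb_eq (hI : I ∈ SphereS) (hJ : J ∈ SphereS)
    (h : sliceEmb J z = sliceEmb I w) : z.re = w.re ∧ (z.im : Hq) * J = w.im * I := by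
  have hre : z.re = w.re := by simpa [re_sliceEmb hI, re_sliceEmb hJ] using congrArg (·.re) h
  exact ⟨hre, by simpa [sliceEmb, hre] using h⟩

lemma im_eq_zero_of_sliceEmb_eq (hI : I ∈ SphereS) (hJ : J ∈ SphereS) (hJI : J ≠ I)
    (hJI' : J ≠ -I) (h : sliceEmb J z = sliceEmb I w) : w.im = 0 := by
  obtain ⟨-, him⟩ := re_eq_and_im_mul_eq_of_sliceEmb_eq hI hJ h
  by_contra hw
  have hsq : z.im ^ 2 = w.im ^ 2 := by
    simpa [Quaternion.normSq_coe, normSq_eq_one_of_mem_sphereS hI,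
      normSq_eq_one_of_mem_sphereS hJ] using congrArg Quaternion.normSq him
  have hw' : (w.im : Hq) ≠ 0 := fun h0 => hw (Quaternion.coe_injective h0)
  rcases sq_eq_sq_iff_eq_or_eq_neg.1 hsq with h' | h'
  · rw [h'] at him
    exact hJI (mul_left_cancel₀ hw' him)
  · rw [h', Quaternion.coe_neg, neg_mul] at him
    exact hJI' (mul_left_cancel₀ hw' (by rw [mul_neg, ← him, neg_neg]))

end SliceIntersection

lemma sliceEmb_injective {I : Hq} (hI : I ∈ SphereS) : Injective (sliceEmb I) := by
  intro z w h
  obtain ⟨hre, him⟩ := re_eq_and_im_mul_eq_of_sliceEmb_eq hI hI h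
  exact Complex.ext hre
    (Quaternion.coe_injective (mul_right_cancel₀ (ne_zero_of_mem_sphereS hI) him))

lemma isOpen_sliceTopology_of_isOpen_preimage (I : Hq) {s : Set Hq}
    (hsI : IsOpen (sliceEmb I ⁻¹' s))
    (hs : ∀ J ∈ SphereS, J ≠ I → J ≠ -I → IsOpen (sliceEmb J ⁻¹' s)) :
    IsOpen[sliceTopology] s := by
  refine isOpen_sliceTopology_iff.2 fun J hJ => ?_
  by_cases hJI : J = I
  · exact hJI ▸ hsI
  by_cases hJI' : J = -I
  · have hconj : sliceEmb (-I) = sliceEmb I ∘ conj := funext (sliceEmb_neg I)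
    rw [hJI', hconj, preimage_comp]
    exact hsI.preimage Complex.continuous_conj
  exact hs J hJ hJI hJI'

section SliceOpen

variable {I : Hq} {B : Set ℂ}

lemma preimage_sliceEmb_image_eq_empty (hI : I ∈ SphereS) (hB : ∀ z ∈ B, z.im ≠ 0) {J : Hq}
    (hJ : J ∈ SphereS) (hJI : J ≠ I) (hJI' : J ≠ -I) : sliceEmb J ⁻¹' (sliceEmb I '' B) = ∅ :=
  eq_empty_of_forall_notMem fun _ ⟨w, hw, hwz⟩ =>
    hB w hw (im_eq_zero_of_sliceEmb_eq hI hJ hJI hJI' hwz.symm)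

lemma isOpen_sliceTopology_image (hI : I ∈ SphereS) (hB : ∀ z ∈ B, z.im ≠ 0) (hBo : IsOpen B) :
    IsOpen[sliceTopology] (sliceEmb I '' B) := by
  refine isOpen_sliceTopology_of_isOpen_preimage I ?_ fun J hJ hJI hJI' => ?_
  · rwa [(sliceEmb_injective hI).preimage_image]
  · rw [preimage_sliceEmb_image_eq_empty hI hB hJ hJI hJI']
    exact isOpen_empty

lemma isOpen_sliceTopology_diff_image (hI : I ∈ SphereS) (hB : ∀ z ∈ B, z.im ≠ 0) {U : Set Hq}
    (hU : IsOpen[sliceTopology] U) (hUB : IsOpen (sliceEmb I ⁻¹' U \ B)) :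
    IsOpen[sliceTopology] (U \ sliceEmb I '' B) := by
  refine isOpen_sliceTopology_of_isOpen_preimage I ?_ fun J hJ hJI hJI' => ?_
  · rwa [preimage_sdiff, (sliceEmb_injective hI).preimage_image]
  · rw [preimage_sdiff, preimage_sliceEmb_image_eq_empty hI hB hJ hJI hJI', sdiff_empty]
    exact isOpen_sliceTopology_iff.1 hU J hJ

end SliceOpen

theorem exists_real_mem_of_slice_separation {U : Set Hq} (hU : IsOpen[sliceTopology] U)
    (hconn : @IsPreconnected Hq sliceTopology U) {I : Hq} (hI : I ∈ SphereS) {A B : Set ℂ}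
    (hA : IsOpen A) (hB : IsOpen B) (hcover : sliceEmb I ⁻¹' U ⊆ A ∪ B)
    (hdisj : sliceEmb I ⁻¹' U ∩ (A ∩ B) = ∅) (hA_ne : (sliceEmb I ⁻¹' U ∩ A).Nonempty)
    (hB_ne : (sliceEmb I ⁻¹' U ∩ B).Nonempty) : ∃ x : ℝ, (x : ℂ) ∈ sliceEmb I ⁻¹' U ∩ B := by
  set V := sliceEmb I ⁻¹' U
  by_contra! hreal
  have hB_im : ∀ z ∈ V ∩ B, z.im ≠ 0 := fun z hz him =>
    hreal z.re (by rwa [show (z.re : ℂ) = z from Complex.ext rfl (by simp [him])])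
  have hV : IsOpen V := isOpen_sliceTopology_iff.1 hU I hI
  have hVA : V \ (V ∩ B) = V ∩ A := by
    ext z
    have hz_cover := @hcover z
    have hz_disj : z ∉ V ∩ (A ∩ B) := hdisj ▸ id
    simp only [mem_sdiff, mem_inter_iff, mem_union] at hz_cover hz_disj ⊢
    tauto
  obtain ⟨a, haV, haA⟩ := hA_ne
  obtain ⟨b, hb⟩ := hB_ne
  obtain ⟨q, -, hq_diff, hq_image⟩ := hconn _ _
    (isOpen_sliceTopology_diff_image hI hB_im hU (hVA ▸ hV.inter hA))
    (isOpen_sliceTopology_image hI hB_im (hV.inter hB)) (subset_sdiff_union U _)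
    ⟨sliceEmb I a, haV, haV, fun ⟨a', ha', h⟩ => hdisj.subset
      ⟨haV, haA, sliceEmb_injective hI h ▸ ha'.2⟩⟩
    ⟨sliceEmb I b, hb.1, b, hb, rfl⟩
  exact hq_diff.2 hq_image

theorem slice_of_realConnected_sliceDomain_general (U : Set Hq)
    (hopen : @IsOpen Hq sliceTopology U)
    (hconn : @IsPreconnected Hq sliceTopology U)
    (hreal : IsPreconnected ((fun x : ℝ => (x : Hq)) ⁻¹' U)) :
    ∀ I ∈ SphereS, IsOpen (sliceEmb I ⁻¹' U) ∧ IsPreconnected (sliceEmb I ⁻¹' U) := by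
  intro I hI
  refine ⟨isOpen_sliceTopology_iff.1 hopen I hI, fun A B hA hB hcover hA_ne hB_ne => ?_⟩
  by_contra hdisj
  rw [not_nonempty_iff_eq_empty] at hdisj
  obtain ⟨x, hxV, hxA⟩ := exists_real_mem_of_slice_separation hopen hconn hI hB hA
    (union_comm A B ▸ hcover) (inter_comm A B ▸ hdisj) hB_ne hA_ne
  obtain ⟨y, hyV, hyB⟩ :=
    exists_real_mem_of_slice_separation hopen hconn hI hA hB hcover hdisj hA_ne hB_ne
  rw [← sliceEmb_comp_ofReal I, preimage_comp] at hreal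
  obtain ⟨t, htV, htA, htB⟩ := hreal _ _ (hA.preimage Complex.continuous_ofReal)
    (hB.preimage Complex.continuous_ofReal) (fun t ht => hcover ht) ⟨x, hxV, hxA⟩ ⟨y, hyV, hyB⟩
  exact hdisj.subset ⟨htV, htA, htB⟩

/-- Each slice of a real-connected slice-domain is a (possibly empty) connected open
subset of the slice plane. -/
theorem slice_of_realConnected_sliceDomain (U : Set Hq)
    (hopen : @IsOpen Hq sliceTopology U)
    (hconn : @IsPreconnected Hq sliceTopology U)
    (hne : U.Nonempty)
    (hreal : IsPreconnected ((fun x : ℝ => (x : Hq)) ⁻¹' U)) :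
    ∀ I ∈ SphereS, IsOpen (sliceEmb I ⁻¹' U) ∧ IsPreconnected (sliceEmb I ⁻¹' U) :=
  slice_of_realConnected_sliceDomain_general U hopen hconn hreal
end
end

section
/- The topological space (ℍ, τ_s), quaternions with the slice-topology, is connected and locally path-connected, and hence path-connected. -/
noncomputable section

/-!
Every quaternion lies in some slice `ℂ_I`, and all slices pass through `0`; since each slice map
`ℂ → ℍ` is continuous for `τ_s`, every point is joined to `0`. Local path-connectedness holds because
`τ_s` is the quotient topology of the disjoint union `Σ I ∈ 𝕊, ℂ`, which is locally path-connected.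
-/

open Topology TopologicalSpace Quaternion

theorem iSup_coinduced_eq_coinduced_sigma {ι X : Type*} {Y : ι → Type*}
    [∀ i, TopologicalSpace (Y i)] (f : ∀ i, Y i → X) :
    ⨆ i, coinduced (f i) inferInstance =
      coinduced (fun p : Σ i, Y i => f p.1 p.2) inferInstance := by
  simp only [instTopologicalSpaceSigma, coinduced_iSup, coinduced_compose]
  rfl

lemma sliceTopology_eq_coinduced_sigma :
    sliceTopology = coinduced (fun p : Σ _ : SphereS, ℂ => sliceEmb p.1 p.2) inferInstance := by
  rw [sliceTopology, iSup_subtype']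
  exact iSup_coinduced_eq_coinduced_sigma fun I : SphereS => sliceEmb I

lemma continuous_sliceEmb {I : Hq} (hI : I ∈ SphereS) :
    Continuous[inferInstance, sliceTopology] (sliceEmb I) := by
  rw [continuous_iff_coinduced_le]
  exact le_iSup₂ (f := fun I _ => coinduced (sliceEmb I) inferInstance) I hI

lemma ofComplex_I_mem_sphereS : ofComplex Complex.I ∈ SphereS := by
  rw [SphereS, Set.mem_ofPred_eq, ← map_pow, Complex.I_sq, map_neg, map_one]

lemma mem_sphereS_of_re_eq_zero {v : Hq} (hre : v.re = 0) (hv : ‖v‖ = 1) : v ∈ SphereS := by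
  rw [SphereS, Set.mem_ofPred_eq, sq_eq_neg_normSq.mpr hre, normSq_eq_norm_mul_self, hv]
  simp

lemma exists_sliceEmb_eq (q : Hq) : ∃ I ∈ SphereS, ∃ z : ℂ, sliceEmb I z = q := by
  by_cases hq : q.im = 0
  · refine ⟨ofComplex Complex.I, ofComplex_I_mem_sphereS, q.re, ?_⟩
    simpa [sliceEmb, hq] using re_add_im q
  · have hnorm : ‖q.im‖ ≠ 0 := norm_ne_zero_iff.mpr hq
    refine ⟨‖q.im‖⁻¹ • q.im, mem_sphereS_of_re_eq_zero (by simp) ?_, ⟨q.re, ‖q.im‖⟩, ?_⟩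
    · rw [norm_smul, norm_inv, norm_norm, inv_mul_cancel₀ hnorm]
    · simp [sliceEmb, coe_mul_eq_smul, smul_smul, inv_mul_cancel₀ hnorm]

lemma pathConnectedSpace_sliceTopology : @PathConnectedSpace Hq sliceTopology := by
  let _ : TopologicalSpace Hq := sliceTopology
  have hjoined (q : Hq) : Joined 0 q := by
    obtain ⟨I, hI, z, rfl⟩ := exists_sliceEmb_eq q
    have h0 : sliceEmb I 0 = 0 := by simp [sliceEmb]
    exact h0 ▸ (PathConnectedSpace.joined 0 z).map (continuous_sliceEmb hI)
  exact ⟨⟨0⟩, fun x y => (hjoined x).symm.trans (hjoined y)⟩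

lemma locallyPathConnectedSpace_sliceTopology : @LocallyPathConnectedSpace Hq sliceTopology :=
  sliceTopology_eq_coinduced_sigma ▸ LocallyPathConnectedSpace.coinduced _

/-- `(ℍ, τ_s)` is connected and locally path-connected, hence path-connected. -/
theorem sliceTopology_connected_locPathConnected :
    @ConnectedSpace Hq sliceTopology ∧
    @LocPathConnectedSpace Hq sliceTopology ∧
    @PathConnectedSpace Hq sliceTopology :=
  let _ : TopologicalSpace Hq := sliceTopology
  ⟨pathConnectedSpace_sliceTopology.connectedSpace, locallyPathConnectedSpace_sliceTopology,
    pathConnectedSpace_sliceTopology⟩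
end
end
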